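/- Kernels in the category of mixed Hodge structures: let f : (V, W, F) → (V', W', F') be a morphism of mixed Hodge structures and let K := ker f ⊆ V. Then the induced filtrations W^K_n := W_n ∩ K on K and F^p_K := F^p ∩ (K)_ℂ on K_ℂ (identifying K_ℂ with ker(f_ℂ) ⊆ V_ℂ) define a mixed Hodge structure on K. -/

import Mathlib

open scoped TensorProduct

private lemma sigmaC_aux (V : Type*) [AddCommGroup V] [Module ℝ V] (c : ℂ) (x : ℂ ⊗[ℝ] V) :
    TensorProduct.map Complex.conjAe.toLinearMap LinearMap.id (c • x) =
      (starRingEnd ℂ) c • TensorProduct.map Complex.conjAe.toLinearMap LinearMap.id x := by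
  induction x using TensorProduct.induction_on with
  | zero => simp
  | tmul z v => simp [TensorProduct.smul_tmul', smul_eq_mul, map_mul]
  | add x y hx hy => simp only [smul_add, map_add, hx, hy]

/-- The conjugation involution `σ` of the complexification `ℂ ⊗[ℝ] V`,
as a `conj`-semilinear map. -/
noncomputable def sigmaC (V : Type*) [AddCommGroup V] [Module ℝ V] :
    (ℂ ⊗[ℝ] V) →ₛₗ[starRingEnd ℂ] (ℂ ⊗[ℝ] V) where
  toFun := TensorProduct.map Complex.conjAe.toLinearMap LinearMap.id
  map_add' x y := map_add _ x y
  map_smul' c x := sigmaC_aux V c x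

/-- A mixed Hodge structure on a real vector space `V`: an increasing, bounded, exhaustive
weight filtration `W` of `V` by real subspaces and a decreasing, bounded, exhaustive Hodge
filtration `F` of `V_ℂ = ℂ ⊗[ℝ] V` by complex subspaces, such that for every `n` the
filtration induced by `F` on `Gr^W_n = W_n / W_{n-1}` is a Hodge filtration of weight `n`.

Identifying the complexification of `Gr^W_n` with `(W_n)_ℂ / (W_{n-1})_ℂ` (where
`(W_n)_ℂ := (W n).baseChange ℂ ⊆ V_ℂ`), the Hodge filtration condition of weight `n` on
`Gr^W_n` — namely `F^p(Gr^W_n)_ℂ ⊕ σ(F^{n-p+1}(Gr^W_n)_ℂ) = (Gr^W_n)_ℂ` for all `p`, where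
`F^p(Gr^W_n)_ℂ` is the image of `F^p ⊓ (W_n)_ℂ` — is expressed below by pulling back along
the quotient map `(W_n)_ℂ → (W_n)_ℂ / (W_{n-1})_ℂ`: the first displayed equation is the
disjointness of the two images in the quotient, the second their spanning of the quotient. -/
def IsMixedHodgeStructure (V : Type*) [AddCommGroup V] [Module ℝ V]
    (W : ℤ → Submodule ℝ V) (F : ℤ → Submodule ℂ (ℂ ⊗[ℝ] V)) : Prop :=
  Monotone W ∧
  (∃ a : ℤ, ∀ n ≤ a, W n = ⊥) ∧
  (∃ b : ℤ, ∀ n ≥ b, W n = ⊤) ∧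
  (∀ p : ℤ, F (p + 1) ≤ F p) ∧
  (∃ a : ℤ, ∀ p ≤ a, F p = ⊤) ∧
  (∃ b : ℤ, ∀ p ≥ b, F p = ⊥) ∧
  (∀ n p : ℤ,
    ((F p ⊓ (W n).baseChange ℂ) ⊔ (W (n - 1)).baseChange ℂ) ⊓
        (((F (n - p + 1) ⊓ (W n).baseChange ℂ).map (sigmaC V)) ⊔ (W (n - 1)).baseChange ℂ)
      = (W (n - 1)).baseChange ℂ ∧
    (F p ⊓ (W n).baseChange ℂ) ⊔ ((F (n - p + 1) ⊓ (W n).baseChange ℂ).map (sigmaC V))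
        ⊔ (W (n - 1)).baseChange ℂ
      = (W n).baseChange ℂ)

/-!
The proof rests on Deligne's splitting. If `F` and `G` are `n`-opposed on every `Gr^W_n`,
the subspaces
`I^{p,q} = F^p ∩ W_{p+q} ∩ (G^q ∩ W_{p+q} + Σ_{j ≥ 1} G^{q-j} ∩ W_{p+q-j-1})` are independent,
and `F^p ∩ W_n` is the sum of the `I^{p',q'}` with `p' ≥ p`, `p' + q' ≤ n`. A morphism `g`
maps `I^{p,q}` into `I'^{p,q}`, so independence in the target shows that `ker g` meets such a
sum in the sum of the `ker g ∩ I^{p,q}`. Hence `g` is strict for the filtrations that `F`, and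
(splitting the triple `(W, G, F)` instead) `G`, induce on `Gr^W_n`, and the opposedness of `F`
and `G` passes to `ker g`. A mixed Hodge structure is the case `G = σ F`; complexification
commutes with kernels and preimages because `ℂ` is flat over `ℝ`.
-/

theorem Int.forall_of_forall_le_of_pred {P : ℤ → Prop} {a : ℤ} (hle : ∀ m ≤ a, P m)
    (hpred : ∀ m, P (m - 1) → P m) (m : ℤ) : P m :=
  Int.inductionOn' m a (hle a le_rfl) (fun k _ hk => hpred (k + 1) (by simpa using hk))
    (fun k _ _ => hle (k - 1) (by omega))

theorem Int.forall_of_forall_ge_of_succ {P : ℤ → Prop} {b : ℤ} (hge : ∀ m ≥ b, P m)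
    (hsucc : ∀ m, P (m + 1) → P m) (m : ℤ) : P m :=
  Int.inductionOn' m b (hge b le_rfl) (fun k _ _ => hge (k + 1) (by omega))
    (fun k _ hk => hsucc (k - 1) (by simpa using hk))

section Independence

variable {R M M' : Type*} [Ring R] [AddCommGroup M] [Module R M] [AddCommGroup M'] [Module R M']

theorem iSupIndep_of_disjoint_iSup_level {ι κ : Type*} [LinearOrder κ] {t : ι → Submodule R M}
    (ℓ : ι → κ) (h : ∀ i, Disjoint (t i) (⨆ (j) (_ : j ≠ i ∧ ℓ j ≤ ℓ i), t j)) : iSupIndep t := by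
  classical
  rw [iSupIndep_iff_finsetSum_eq_zero_imp_eq_zero]
  intro s
  induction s using Finset.induction_on_max_value ℓ with
  | empty => simp
  | insert a s has hmax ih =>
    intro v hv hsum
    rw [Finset.sum_insert has] at hsum
    have hva : v a = 0 := by
      refine Submodule.disjoint_def.mp (h a) _ (hv a (s.mem_insert_self a)) ?_
      rw [eq_neg_of_add_eq_zero_left hsum, Submodule.neg_mem_iff]
      refine Submodule.sum_mem _ fun j hj => ?_
      exact Submodule.mem_iSup_of_mem j <| Submodule.mem_iSup_of_mem
        ⟨ne_of_mem_of_not_mem hj has, hmax j hj⟩ (hv j (Finset.mem_insert_of_mem hj))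
    rw [hva, zero_add] at hsum
    intro i hi
    rcases Finset.mem_insert.mp hi with rfl | hi
    · exact hva
    · exact ih v (fun j hj => hv j (Finset.mem_insert_of_mem hj)) hsum i hi

theorem iSup_inf_ker_of_iSupIndep {ι : Type*} {A : ι → Submodule R M} {B : ι → Submodule R M'}
    (hB : iSupIndep B) {g : M →ₗ[R] M'} (hAB : ∀ i, (A i).map g ≤ B i) :
    (⨆ i, A i) ⊓ LinearMap.ker g = ⨆ i, A i ⊓ LinearMap.ker g := by
  refine le_antisymm (fun x ⟨hx, hgx⟩ => ?_) (iSup_le fun i => inf_le_inf_right _ (le_iSup A i))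
  obtain ⟨c, hc, rfl⟩ := (Submodule.mem_iSup_iff_exists_finsupp A x).mp hx
  have hgc : ∀ i ∈ c.support, g (c i) = 0 := by
    refine (iSupIndep_iff_finsetSum_eq_zero_imp_eq_zero B).mp hB c.support (fun i => g (c i))
      (fun i _ => hAB i ⟨c i, hc i, rfl⟩) ?_
    simpa [Finsupp.sum, map_sum] using hgx
  exact Submodule.sum_mem _ fun i hi => Submodule.mem_iSup_of_mem i ⟨hc i, hgc i hi⟩

theorem biSup_inf_ker_of_iSupIndep {ι : Type*} {A : ι → Submodule R M} {B : ι → Submodule R M'}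
    (hB : iSupIndep B) {g : M →ₗ[R] M'} (hAB : ∀ i, (A i).map g ≤ B i) (S : Set ι) :
    (⨆ i ∈ S, A i) ⊓ LinearMap.ker g = ⨆ i ∈ S, A i ⊓ LinearMap.ker g := by
  simpa only [iSup_subtype'] using
    iSup_inf_ker_of_iSupIndep (hB.comp Subtype.val_injective) fun i : S => hAB i

theorem sup_inf_ker_of_iSupIndep {ι : Type*} {A : ι → Submodule R M} {B : ι → Submodule R M'}
    (hB : iSupIndep B) {g : M →ₗ[R] M'} (hAB : ∀ i, (A i).map g ≤ B i) (S T : Set ι) :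
    ((⨆ i ∈ S, A i) ⊔ ⨆ i ∈ T, A i) ⊓ LinearMap.ker g =
      (⨆ i ∈ S, A i) ⊓ LinearMap.ker g ⊔ (⨆ i ∈ T, A i) ⊓ LinearMap.ker g := by
  refine le_antisymm ?_ (sup_le (inf_le_inf_right _ le_sup_left) (inf_le_inf_right _ le_sup_right))
  rw [← iSup_union, biSup_inf_ker_of_iSupIndep hB hAB, iSup_union]
  exact sup_le_sup (iSup₂_le fun i hi => inf_le_inf_right _ (le_biSup A hi))
    (iSup₂_le fun i hi => inf_le_inf_right _ (le_biSup A hi))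

end Independence

section Opposed

variable {R M : Type*} [Ring R] [AddCommGroup M] [Module R M]

/-- The preimage in `W n` of the filtration `F^p Gr^W_n` induced by `F`. -/
def grFilt (W F : ℤ → Submodule R M) (p n : ℤ) : Submodule R M :=
  F p ⊓ W n ⊔ W (n - 1)

def IsOpposedOn (W F G : ℤ → Submodule R M) (n : ℤ) : Prop :=
  ∀ p, grFilt W F p n ⊓ grFilt W G (n - p + 1) n = W (n - 1) ∧
    grFilt W F p n ⊔ grFilt W G (n - p + 1) n = W n

/-- `G` plays the role of the complex conjugate filtration `σ F`. -/
structure IsMixedOpposed (W F G : ℤ → Submodule R M) : Prop where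
  monotone_W : Monotone W
  antitone_F : Antitone F
  antitone_G : Antitone G
  W_eq_bot : ∃ a, ∀ n ≤ a, W n = ⊥
  F_eq_top : ∃ a, ∀ p ≤ a, F p = ⊤
  F_eq_bot : ∃ b, ∀ p ≥ b, F p = ⊥
  G_eq_top : ∃ a, ∀ p ≤ a, G p = ⊤
  G_eq_bot : ∃ b, ∀ p ≥ b, G p = ⊥
  opposed : ∀ n, IsOpposedOn W F G n

variable {W F G : ℤ → Submodule R M}

theorem W_pred_le_grFilt {p n : ℤ} : W (n - 1) ≤ grFilt W F p n :=
  le_sup_right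

theorem grFilt_le_grFilt (hW : Monotone W) (hF : Antitone F) {p p' m n : ℤ} (hp : p ≤ p')
    (hmn : m ≤ n) : grFilt W F p' m ≤ grFilt W F p n := by
  rcases hmn.lt_or_eq with hlt | rfl
  · exact (sup_le (inf_le_right.trans (hW (by omega))) (hW (by omega))).trans le_sup_right
  · exact sup_le_sup_right (inf_le_inf_right _ (hF hp)) _

theorem IsOpposedOn.symm {n : ℤ} (h : IsOpposedOn W F G n) : IsOpposedOn W G F n := fun p => by
  obtain ⟨hinf, hsup⟩ := h (n - p + 1)
  rw [show n - (n - p + 1) + 1 = p by ring] at hinf hsup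
  exact ⟨by rw [inf_comm, hinf], by rw [sup_comm, hsup]⟩

theorem IsOpposedOn.of_map {M₀ : Type*} [AddCommGroup M₀] [Module R M₀]
    {W₀ F₀ G₀ : ℤ → Submodule R M₀} {j : M₀ →ₗ[R] M} (hj : Function.Injective j) {n : ℤ}
    (h : IsOpposedOn (fun n => (W₀ n).map j) (fun p => (F₀ p).map j) (fun p => (G₀ p).map j) n) :
    IsOpposedOn W₀ F₀ G₀ n := fun p => by
  obtain ⟨hinf, hsup⟩ := h p
  simp only [grFilt] at hinf hsup
  refine ⟨Submodule.map_injective_of_injective hj ?_, Submodule.map_injective_of_injective hj ?_⟩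
  · simpa only [grFilt, Submodule.map_sup, Submodule.map_inf _ hj] using hinf
  · simpa only [grFilt, Submodule.map_sup, Submodule.map_inf _ hj] using hsup

theorem IsMixedOpposed.symm (h : IsMixedOpposed W F G) : IsMixedOpposed W G F :=
  ⟨h.monotone_W, h.antitone_G, h.antitone_F, h.W_eq_bot, h.G_eq_top, h.G_eq_bot, h.F_eq_top,
    h.F_eq_bot, fun n => (h.opposed n).symm⟩

end Opposed

section Deligne

variable {R M : Type*} [Ring R] [AddCommGroup M] [Module R M] {W F G : ℤ → Submodule R M}

/-- Deligne's `I^{p,q}`, with the sum over `j ≥ 1` reindexed by the weight `m = p + q - j - 1`;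
the extra term `m = p + q - 1` lies in `G^q ∩ W_{p+q}`. -/
def deligneI (W F G : ℤ → Submodule R M) (p q : ℤ) : Submodule R M :=
  F p ⊓ W (p + q) ⊓ (G q ⊓ W (p + q) ⊔ ⨆ (m : ℤ) (_ : m < p + q), G (m - p + 1) ⊓ W m)

theorem deligneI_le_F_inf_W {p q n : ℤ} (hpq : p + q = n) : deligneI W F G p q ≤ F p ⊓ W n :=
  hpq ▸ inf_le_left

theorem deligneI_le_W_pred (hW : Monotone W) {p q n : ℤ} (hn : p + q < n) :
    deligneI W F G p q ≤ W (n - 1) :=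
  (deligneI_le_F_inf_W rfl).trans (inf_le_right.trans (hW (by omega)))

theorem deligneI_le_grFilt_F (hW : Monotone W) (hF : Antitone F) {p p' q' n : ℤ} (hp : p ≤ p')
    (hn : p' + q' ≤ n) : deligneI W F G p' q' ≤ grFilt W F p n :=
  (le_sup_of_le_left (deligneI_le_F_inf_W rfl)).trans (grFilt_le_grFilt hW hF hp hn)

theorem deligneI_le_grFilt_G (hW : Monotone W) (hG : Antitone G) {q p' q' n : ℤ} (hq : q ≤ q')
    (hn : p' + q' ≤ n) : deligneI W F G p' q' ≤ grFilt W G q n := by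
  refine (inf_le_right.trans (sup_le_sup_left ?_ _)).trans (grFilt_le_grFilt hW hG hq hn)
  exact iSup₂_le fun _ hm => inf_le_right.trans (hW (by omega))

theorem deligneI_le_grFilt_or (hW : Monotone W) (hF : Antitone F) (hG : Antitone G)
    {p' q' n : ℤ} (hn : p' + q' ≤ n) (p : ℤ) :
    deligneI W F G p' q' ≤ grFilt W F p n ∨ deligneI W F G p' q' ≤ grFilt W G (n - p + 1) n := by
  rcases le_or_gt p p' with hp | hp
  · exact .inl (deligneI_le_grFilt_F hW hF hp hn)
  rcases le_or_gt (n - p + 1) q' with hq | hq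
  · exact .inr (deligneI_le_grFilt_G hW hG hq hn)
  · exact .inl ((deligneI_le_W_pred hW (by omega)).trans le_sup_right)

theorem map_deligneI_le {M' : Type*} [AddCommGroup M'] [Module R M']
    {W' F' G' : ℤ → Submodule R M'} {g : M →ₗ[R] M'} (hW : ∀ n, (W n).map g ≤ W' n)
    (hF : ∀ p, (F p).map g ≤ F' p) (hG : ∀ p, (G p).map g ≤ G' p) (p q : ℤ) :
    (deligneI W F G p q).map g ≤ deligneI W' F' G' p q := by
  have map_inf_le {A B : Submodule R M} {A' B' : Submodule R M'} (hA : A.map g ≤ A')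
      (hB : B.map g ≤ B') : (A ⊓ B).map g ≤ A' ⊓ B' :=
    (Submodule.map_inf_le g).trans (inf_le_inf hA hB)
  refine map_inf_le (map_inf_le (hF p) (hW _)) ?_
  simp only [Submodule.map_sup, Submodule.map_iSup]
  exact sup_le_sup (map_inf_le (hG q) (hW _)) (iSup₂_mono fun m _ => map_inf_le (hG _) (hW m))

namespace IsMixedOpposed

theorem deligneI_inf_W_le (h : IsMixedOpposed W F G) {p q m : ℤ} (hm : m < p + q) :
    deligneI W F G p q ⊓ W m ≤ W (m - 1) := by
  rw [← ((h.opposed m) p).1]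
  refine le_inf (le_sup_of_le_left (inf_le_inf_right _ (inf_le_left.trans inf_le_left))) ?_
  have htail : G q ⊓ W (p + q) ⊔ ⨆ (m' : ℤ) (_ : m' < p + q), G (m' - p + 1) ⊓ W m' ≤
      G (m - p + 1) ⊔ W (m - 1) := by
    refine sup_le (le_sup_of_le_left (inf_le_left.trans (h.antitone_G (by omega))))
      (iSup₂_le fun m' _ => ?_)
    rcases le_or_gt m m' with hm' | hm'
    · exact le_sup_of_le_left (inf_le_left.trans (h.antitone_G (by omega)))
    · exact le_sup_of_le_right (inf_le_right.trans (h.monotone_W (by omega)))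
  calc deligneI W F G p q ⊓ W m ≤ (G (m - p + 1) ⊔ W (m - 1)) ⊓ W m :=
        inf_le_inf_right _ (inf_le_right.trans htail)
    _ = grFilt W G (m - p + 1) m := by
        rw [grFilt, sup_comm (G _), sup_inf_assoc_of_le _ (h.monotone_W (by omega)), sup_comm]

theorem deligneI_inf_W_eq_bot (h : IsMixedOpposed W F G) (p q : ℤ) :
    deligneI W F G p q ⊓ W (p + q - 1) = ⊥ := by
  obtain ⟨a, ha⟩ := h.W_eq_bot
  refine Int.forall_of_forall_le_of_pred (P := fun m => m < p + q → deligneI W F G p q ⊓ W m = ⊥)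
    (a := a) (fun m hm _ => by rw [ha m hm, inf_bot_eq]) (fun m ih hm => ?_) _ (by omega)
  refine eq_bot_iff.mpr ?_
  calc deligneI W F G p q ⊓ W m = deligneI W F G p q ⊓ W m ⊓ W (m - 1) :=
        (inf_eq_left.mpr (h.deligneI_inf_W_le hm)).symm
    _ ≤ deligneI W F G p q ⊓ W (m - 1) := inf_le_inf_right _ inf_le_left
    _ = ⊥ := ih (by omega)

theorem W_le_F_inf_W_sup_iSup (h : IsMixedOpposed W F G) (p : ℤ) {m n : ℤ} (hm : m < n) :
    W m ≤ F p ⊓ W (n - 1) ⊔ ⨆ (m' : ℤ) (_ : m' < n), G (m' - p + 1) ⊓ W m' := by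
  obtain ⟨a, ha⟩ := h.W_eq_bot
  refine Int.forall_of_forall_le_of_pred (P := fun m => m < n → W m ≤ _) (a := a)
    (fun m hm _ => by rw [ha m hm]; exact bot_le) (fun m ih hm => ?_) m hm
  rw [← ((h.opposed m) p).2, grFilt, grFilt]
  refine sup_le (sup_le (le_sup_of_le_left (inf_le_inf_left _ (h.monotone_W (by omega))))
    (ih (by omega))) (sup_le ?_ (ih (by omega)))
  exact le_sup_of_le_right (le_iSup₂_of_le m hm le_rfl)

theorem grFilt_inf_grFilt (h : IsMixedOpposed W F G) (p q : ℤ) :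
    grFilt W F p (p + q) ⊓ grFilt W G q (p + q) = deligneI W F G p q ⊔ W (p + q - 1) := by
  set L := ⨆ (m : ℤ) (_ : m < p + q), G (m - p + 1) ⊓ W m
  set X := F p ⊓ W (p + q - 1)
  have hXA : X ≤ F p ⊓ W (p + q) := inf_le_inf_left _ (h.monotone_W (by omega))
  have hW : W (p + q - 1) = X ⊔ L :=
    le_antisymm (h.W_le_F_inf_W_sup_iSup p (by omega))
      (sup_le inf_le_right (iSup₂_le fun m hm => inf_le_right.trans (h.monotone_W (by omega))))
  have hI : deligneI W F G p q = F p ⊓ W (p + q) ⊓ (G q ⊓ W (p + q) ⊔ L) := rfl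
  refine le_antisymm (le_of_eq ?_) (sup_le (le_inf (le_sup_of_le_left inf_le_left)
    (deligneI_le_grFilt_G h.monotone_W h.antitone_G le_rfl le_rfl))
    (le_inf le_sup_right le_sup_right))
  calc grFilt W F p (p + q) ⊓ grFilt W G q (p + q)
      = (F p ⊓ W (p + q) ⊔ L) ⊓ ((G q ⊓ W (p + q) ⊔ L) ⊔ X) := by
        rw [grFilt, grFilt, hW, ← sup_assoc, sup_eq_left.mpr hXA]
        congr 1
        ac_rfl
    _ = X ⊔ (G q ⊓ W (p + q) ⊔ L) ⊓ (F p ⊓ W (p + q) ⊔ L) := by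
        rw [inf_comm, sup_comm _ X, sup_inf_assoc_of_le _ (hXA.trans le_sup_left)]
    _ = X ⊔ (L ⊔ F p ⊓ W (p + q) ⊓ (G q ⊓ W (p + q) ⊔ L)) := by
        rw [inf_comm (G q ⊓ W (p + q) ⊔ L), sup_comm (F p ⊓ W (p + q)) L,
          sup_inf_assoc_of_le _ le_sup_right]
    _ = deligneI W F G p q ⊔ W (p + q - 1) := by
        rw [hW, hI]
        ac_rfl

theorem grFilt_eq_grFilt_succ_sup (h : IsMixedOpposed W F G) {p q n : ℤ} (hpq : p + q = n) :
    grFilt W F p n = grFilt W F (p + 1) n ⊔ deligneI W F G p q := by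
  subst hpq
  have hle : grFilt W F (p + 1) (p + q) ≤ grFilt W F p (p + q) :=
    grFilt_le_grFilt h.monotone_W h.antitone_F (by omega) le_rfl
  have hsup := ((h.opposed (p + q)) (p + 1)).2
  rw [show p + q - (p + 1) + 1 = q by ring] at hsup
  calc grFilt W F p (p + q)
      = grFilt W F p (p + q) ⊓ (grFilt W F (p + 1) (p + q) ⊔ grFilt W G q (p + q)) := by
        rw [hsup]
        exact (inf_eq_left.mpr (sup_le inf_le_right (h.monotone_W (by omega)))).symm
    _ = grFilt W F (p + 1) (p + q) ⊔ (deligneI W F G p q ⊔ W (p + q - 1)) := by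
        rw [inf_comm, sup_inf_assoc_of_le _ hle, inf_comm (grFilt W G q _), h.grFilt_inf_grFilt]
    _ = grFilt W F (p + 1) (p + q) ⊔ deligneI W F G p q := by
        rw [sup_comm (deligneI W F G p q), ← sup_assoc,
          sup_eq_left.mpr (W_pred_le_grFilt (F := F) (p := p + 1) (n := p + q))]

theorem F_inf_W_eq_biSup (h : IsMixedOpposed W F G) (p n : ℤ) :
    F p ⊓ W n = ⨆ i ∈ {i : ℤ × ℤ | p ≤ i.1 ∧ i.1 + i.2 ≤ n}, deligneI W F G i.1 i.2 := by
  refine le_antisymm ?_ (iSup₂_le fun i hi =>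
    (deligneI_le_F_inf_W rfl).trans (inf_le_inf (h.antitone_F hi.1) (h.monotone_W hi.2)))
  obtain ⟨a, ha⟩ := h.W_eq_bot
  obtain ⟨b, hb⟩ := h.F_eq_bot
  set S := fun p n => ⨆ i ∈ {i : ℤ × ℤ | p ≤ i.1 ∧ i.1 + i.2 ≤ n}, deligneI W F G i.1 i.2
  have hS {p p' n n' : ℤ} (hp : p ≤ p') (hn : n' ≤ n) : S p' n' ≤ S p n :=
    biSup_mono fun i hi => ⟨hp.trans hi.1, hi.2.trans hn⟩
  refine Int.forall_of_forall_le_of_pred (P := fun n => ∀ p, F p ⊓ W n ≤ S p n) (a := a)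
    (fun n hn p => by rw [ha n hn, inf_bot_eq]; exact bot_le) (fun n ihn => ?_) n p
  refine Int.forall_of_forall_ge_of_succ (b := b)
    (fun p hp => by rw [hb p hp, bot_inf_eq]; exact bot_le) fun p ihp => ?_
  have hI : deligneI W F G p (n - p) ≤ F p ⊓ W n := deligneI_le_F_inf_W (by ring)
  have hFW : F (p + 1) ⊓ W n ⊔ deligneI W F G p (n - p) ≤ F p ⊓ W n :=
    sup_le (inf_le_inf_right _ (h.antitone_F (by omega))) hI
  calc F p ⊓ W n
      ≤ (F (p + 1) ⊓ W n ⊔ deligneI W F G p (n - p) ⊔ W (n - 1)) ⊓ (F p ⊓ W n) := by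
        refine le_inf ?_ le_rfl
        rw [sup_right_comm, ← grFilt, ← h.grFilt_eq_grFilt_succ_sup (by ring)]
        exact le_sup_left
    _ = F (p + 1) ⊓ W n ⊔ deligneI W F G p (n - p) ⊔ W (n - 1) ⊓ (F p ⊓ W n) :=
        sup_inf_assoc_of_le _ hFW
    _ ≤ S p n := by
        refine sup_le (sup_le (ihp.trans (hS (by omega) le_rfl))
          (le_iSup₂_of_le (p, n - p) ⟨le_rfl, by simp⟩ le_rfl)) ?_
        calc W (n - 1) ⊓ (F p ⊓ W n) ≤ F p ⊓ W (n - 1) :=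
              le_inf (inf_le_right.trans inf_le_left) inf_le_left
          _ ≤ S p n := (ihn p).trans (hS le_rfl (by omega))

theorem grFilt_inf_grFilt_inf_sup_le (h : IsMixedOpposed W F G) {p q n : ℤ} (hpq : p + q = n) :
    grFilt W F p n ⊓ grFilt W G q n ⊓ (grFilt W F (p + 1) n ⊔ grFilt W G (q + 1) n) ≤
      W (n - 1) := by
  have hF := (h.opposed n p).1
  have hG := (h.opposed n (p + 1)).1
  rw [show n - p + 1 = q + 1 by omega] at hF
  rw [show n - (p + 1) + 1 = q by omega] at hG
  have hle : grFilt W G (q + 1) n ≤ grFilt W G q n :=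
    grFilt_le_grFilt h.monotone_W h.antitone_G (by omega) le_rfl
  apply le_of_eq
  calc grFilt W F p n ⊓ grFilt W G q n ⊓ (grFilt W F (p + 1) n ⊔ grFilt W G (q + 1) n)
      = grFilt W F p n ⊓ (grFilt W G (q + 1) n ⊔ grFilt W F (p + 1) n ⊓ grFilt W G q n) := by
        rw [inf_assoc, inf_comm (grFilt W G q n), sup_comm, sup_inf_assoc_of_le _ hle]
    _ = W (n - 1) := by
        rw [hG, sup_eq_left.mpr (W_pred_le_grFilt (F := G) (p := q + 1) (n := n)), hF]

theorem iSupIndep_deligneI (h : IsMixedOpposed W F G) :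
    iSupIndep fun i : ℤ × ℤ => deligneI W F G i.1 i.2 := by
  refine iSupIndep_of_disjoint_iSup_level (fun i => i.1 + i.2) fun ⟨p, q⟩ => ?_
  rw [disjoint_iff, eq_bot_iff, ← h.deligneI_inf_W_eq_bot p q]
  refine le_inf inf_le_left (le_trans ?_ (h.grFilt_inf_grFilt_inf_sup_le rfl))
  refine inf_le_inf (le_inf (deligneI_le_grFilt_F h.monotone_W h.antitone_F le_rfl le_rfl)
    (deligneI_le_grFilt_G h.monotone_W h.antitone_G le_rfl le_rfl)) (iSup₂_le fun j hj => ?_)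
  rcases lt_or_ge p j.1 with hp | hp
  · exact le_sup_of_le_left (deligneI_le_grFilt_F h.monotone_W h.antitone_F hp hj.2)
  rcases lt_or_ge q j.2 with hq | hq
  · exact le_sup_of_le_right (deligneI_le_grFilt_G h.monotone_W h.antitone_G hq hj.2)
  have hlt : j.1 + j.2 < p + q := by
    rcases hp.lt_or_eq with hp | hp
    · omega
    · rcases hq.lt_or_eq with hq | hq
      · omega
      · exact absurd (Prod.ext hp hq) hj.1
  exact le_sup_of_le_left ((deligneI_le_W_pred h.monotone_W hlt).trans le_sup_right)

end IsMixedOpposed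

end Deligne

section Kernel

variable {R M M' : Type*} [Ring R] [AddCommGroup M] [Module R M] [AddCommGroup M'] [Module R M']
  {W F G : ℤ → Submodule R M} {W' F' G' : ℤ → Submodule R M'} {g : M →ₗ[R] M'}

namespace IsMixedOpposed

theorem grFilt_inf_ker (h : IsMixedOpposed W F G) (h' : IsMixedOpposed W' F' G')
    (hW : ∀ n, (W n).map g ≤ W' n) (hF : ∀ p, (F p).map g ≤ F' p) (hG : ∀ p, (G p).map g ≤ G' p)
    (p n : ℤ) :
    grFilt W F p n ⊓ LinearMap.ker g =
      grFilt (fun n => W n ⊓ LinearMap.ker g) (fun p => F p ⊓ LinearMap.ker g) p n := by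
  obtain ⟨a, ha⟩ := h.F_eq_top
  have key := sup_inf_ker_of_iSupIndep h'.iSupIndep_deligneI
    (fun i => map_deligneI_le hW hF hG i.1 i.2) {i | p ≤ i.1 ∧ i.1 + i.2 ≤ n}
    {i | a ≤ i.1 ∧ i.1 + i.2 ≤ n - 1}
  rw [← h.F_inf_W_eq_biSup, ← h.F_inf_W_eq_biSup, ha a le_rfl, top_inf_eq] at key
  simp only [grFilt]
  rw [key, inf_inf_distrib_right (F p)]

theorem isOpposedOn_inf_ker (h : IsMixedOpposed W F G) (h' : IsMixedOpposed W' F' G')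
    (hW : ∀ n, (W n).map g ≤ W' n) (hF : ∀ p, (F p).map g ≤ F' p) (hG : ∀ p, (G p).map g ≤ G' p)
    (n : ℤ) :
    IsOpposedOn (fun n => W n ⊓ LinearMap.ker g) (fun p => F p ⊓ LinearMap.ker g)
      (fun p => G p ⊓ LinearMap.ker g) n := by
  intro p
  beta_reduce
  -- Strictness for `G` comes from the splitting of the swapped triple `(W, G, F)`.
  rw [← h.grFilt_inf_ker h' hW hF hG, ← h.symm.grFilt_inf_ker h'.symm hW hG hF]
  obtain ⟨hinf, hsup⟩ := h.opposed n p
  refine ⟨by rw [← inf_inf_distrib_right, hinf], le_antisymm ?_ ?_⟩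
  · rw [← hsup]
    exact sup_le (inf_le_inf_right _ le_sup_left) (inf_le_inf_right _ le_sup_right)
  obtain ⟨a, ha⟩ := h.F_eq_top
  calc W n ⊓ LinearMap.ker g
      = ⨆ i ∈ {i : ℤ × ℤ | a ≤ i.1 ∧ i.1 + i.2 ≤ n}, deligneI W F G i.1 i.2 ⊓ LinearMap.ker g := by
        rw [← biSup_inf_ker_of_iSupIndep h'.iSupIndep_deligneI
          (fun i => map_deligneI_le hW hF hG i.1 i.2), ← h.F_inf_W_eq_biSup, ha a le_rfl,
          top_inf_eq]
    _ ≤ _ := iSup₂_le fun i hi => by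
        rcases deligneI_le_grFilt_or h.monotone_W h.antitone_F h.antitone_G hi.2 p with hle | hle
        · exact le_sup_of_le_left (inf_le_inf_right _ hle)
        · exact le_sup_of_le_right (inf_le_inf_right _ hle)

end IsMixedOpposed

end Kernel

section BaseChange

variable {R A V V' : Type*} [CommRing R] [CommRing A] [Algebra R A] [Module.Flat R A]
  [AddCommGroup V] [Module R V] [AddCommGroup V'] [Module R V']

theorem LinearMap.ker_baseChange_eq (f : V →ₗ[R] V') :
    LinearMap.ker (f.baseChange A) = (LinearMap.ker f).baseChange A :=
  Module.Flat.ker_lTensor_eq A A f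

theorem Submodule.baseChange_comap (f : V →ₗ[R] V') (q : Submodule R V') :
    (q.comap f).baseChange A = (q.baseChange A).comap (f.baseChange A) := by
  rw [← q.ker_mkQ, ← LinearMap.ker_comp, ← LinearMap.ker_baseChange_eq,
    ← LinearMap.ker_baseChange_eq, LinearMap.baseChange_comp, LinearMap.ker_comp]

theorem Submodule.injective_subtype_baseChange (K : Submodule R V) :
    Function.Injective (K.subtype.baseChange A) := by
  rw [← LinearMap.ker_eq_bot, LinearMap.ker_baseChange_eq, K.ker_subtype,
    Submodule.baseChange_bot]

theorem Submodule.map_baseChange_le {f : V →ₗ[R] V'} {p : Submodule R V} {q : Submodule R V'}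
    (h : p.map f ≤ q) : (p.baseChange A).map (f.baseChange A) ≤ q.baseChange A := by
  rw [Submodule.map_le_iff_le_comap, ← Submodule.baseChange_comap]
  exact Submodule.baseChange_mono A (Submodule.map_le_iff_le_comap.mp h)

end BaseChange

section Conjugation

variable {U : Type*} [AddCommGroup U] [Module ℂ U]

theorem map_eq_self_of_involutive {σ : U →ₛₗ[starRingEnd ℂ] U} (hσ : Function.Involutive σ)
    {S : Submodule ℂ U} (hS : S.map σ ≤ S) : S.map σ = S :=
  le_antisymm hS fun x hx => ⟨σ x, hS (Submodule.mem_map_of_mem hx), hσ x⟩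

def IsHodgeOnGr (σ : U →ₛₗ[starRingEnd ℂ] U) (W F : ℤ → Submodule ℂ U) (n : ℤ) : Prop :=
  ∀ p, ((F p ⊓ W n) ⊔ W (n - 1)) ⊓ (((F (n - p + 1) ⊓ W n).map σ) ⊔ W (n - 1)) = W (n - 1) ∧
    (F p ⊓ W n) ⊔ ((F (n - p + 1) ⊓ W n).map σ) ⊔ W (n - 1) = W n

theorem isHodgeOnGr_iff {σ : U →ₛₗ[starRingEnd ℂ] U} (hσ : Function.Involutive σ)
    {W F : ℤ → Submodule ℂ U} (hW : ∀ n, (W n).map σ = W n) {n : ℤ} :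
    IsHodgeOnGr σ W F n ↔ IsOpposedOn W F (fun p => (F p).map σ) n := by
  simp only [IsHodgeOnGr, IsOpposedOn, grFilt, Submodule.map_inf σ hσ.injective, hW,
    ← sup_sup_distrib_right]

end Conjugation

section Complexification

variable {V V' : Type*} [AddCommGroup V] [Module ℝ V] [AddCommGroup V'] [Module ℝ V']

theorem sigmaC_involutive : Function.Involutive (sigmaC V) := fun x => by
  induction x using TensorProduct.induction_on with
  | zero => rfl
  | tmul z v => simp [sigmaC]
  | add x y hx hy => rw [map_add, map_add, hx, hy]

theorem baseChange_sigmaC (f : V →ₗ[ℝ] V') (x : ℂ ⊗[ℝ] V) :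
    f.baseChange ℂ (sigmaC V x) = sigmaC V' (f.baseChange ℂ x) := by
  induction x using TensorProduct.induction_on with
  | zero => simp
  | tmul z v => rfl
  | add x y hx hy => rw [map_add, map_add, map_add, map_add, hx, hy]

theorem map_sigmaC_map_baseChange (f : V →ₗ[ℝ] V') (S : Submodule ℂ (ℂ ⊗[ℝ] V)) :
    (S.map (sigmaC V)).map (f.baseChange ℂ) = (S.map (f.baseChange ℂ)).map (sigmaC V') := by
  rw [← Submodule.map_comp, ← Submodule.map_comp]
  congr 1
  ext x
  exact baseChange_sigmaC f x

theorem map_sigmaC_baseChange (p : Submodule ℝ V) :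
    (p.baseChange ℂ).map (sigmaC V) = p.baseChange ℂ := by
  refine map_eq_self_of_involutive sigmaC_involutive ?_
  rintro _ ⟨_, ⟨y, rfl⟩, rfl⟩
  exact ⟨sigmaC p y, baseChange_sigmaC p.subtype y⟩

end Complexification

namespace IsMixedHodgeStructure

variable {V : Type*} [AddCommGroup V] [Module ℝ V] {W : ℤ → Submodule ℝ V}
  {F : ℤ → Submodule ℂ (ℂ ⊗[ℝ] V)}

theorem isMixedOpposed (h : IsMixedHodgeStructure V W F) :
    IsMixedOpposed (fun n => (W n).baseChange ℂ) F (fun p => (F p).map (sigmaC V)) := by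
  obtain ⟨hW, ⟨a, ha⟩, -, hF, ⟨c, hc⟩, ⟨d, hd⟩, hodge⟩ := h
  have hσ : LinearMap.range (sigmaC V) = ⊤ :=
    LinearMap.range_eq_top.mpr sigmaC_involutive.surjective
  exact
    { monotone_W := fun m n hmn => Submodule.baseChange_mono ℂ (hW hmn)
      antitone_F := antitone_int_of_succ_le hF
      antitone_G := fun p q hpq => Submodule.map_mono (antitone_int_of_succ_le hF hpq)
      W_eq_bot := ⟨a, fun n hn => by rw [ha n hn, Submodule.baseChange_bot]⟩
      F_eq_top := ⟨c, hc⟩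
      F_eq_bot := ⟨d, hd⟩
      G_eq_top := ⟨c, fun p hp => by rw [hc p hp, Submodule.map_top, hσ]⟩
      G_eq_bot := ⟨d, fun p hp => by rw [hd p hp, Submodule.map_bot]⟩
      opposed := fun n =>
        (isHodgeOnGr_iff sigmaC_involutive fun n => map_sigmaC_baseChange (W n)).mp (hodge n) }

theorem restrict (h : IsMixedHodgeStructure V W F) (K : Submodule ℝ V)
    (hK : ∀ n, IsOpposedOn (fun n => (W n).baseChange ℂ ⊓ K.baseChange ℂ)
      (fun p => F p ⊓ K.baseChange ℂ) (fun p => (F p).map (sigmaC V) ⊓ K.baseChange ℂ) n) :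
    IsMixedHodgeStructure K (fun n => (W n).comap K.subtype)
      (fun p => (F p).comap (K.subtype.baseChange ℂ)) := by
  set ι := K.subtype.baseChange ℂ
  have hι : Function.Injective ι := K.injective_subtype_baseChange
  have hrange : LinearMap.range ι = K.baseChange ℂ := rfl
  obtain ⟨hW, ⟨a, ha⟩, ⟨b, hb⟩, hF, ⟨c, hc⟩, ⟨d, hd⟩, -⟩ := h
  refine ⟨fun m n hmn => Submodule.comap_mono (hW hmn),
    ⟨a, fun n hn => by beta_reduce; rw [ha n hn, Submodule.comap_bot, K.ker_subtype]⟩,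
    ⟨b, fun n hn => by beta_reduce; rw [hb n hn, Submodule.comap_top]⟩,
    fun p => Submodule.comap_mono (hF p),
    ⟨c, fun p hp => by beta_reduce; rw [hc p hp, Submodule.comap_top]⟩,
    ⟨d, fun p hp => by beta_reduce; rw [hd p hp, Submodule.comap_bot, LinearMap.ker_eq_bot.mpr hι]⟩,
    fun n => ?_⟩
  have hmapF (p : ℤ) : ((F p).comap ι).map ι = F p ⊓ K.baseChange ℂ := by
    rw [Submodule.map_comap_eq, hrange, inf_comm]
  have hW_K : (fun n => (((W n).comap K.subtype).baseChange ℂ).map ι) =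
      fun n => (W n).baseChange ℂ ⊓ K.baseChange ℂ := funext fun n => by
    rw [Submodule.baseChange_comap, Submodule.map_comap_eq, hrange, inf_comm]
  have hG_K : (fun p => (((F p).comap ι).map (sigmaC K)).map ι) =
      fun p => (F p).map (sigmaC V) ⊓ K.baseChange ℂ := funext fun p => by
    rw [map_sigmaC_map_baseChange, hmapF, Submodule.map_inf _ sigmaC_involutive.injective,
      map_sigmaC_baseChange]
  show IsHodgeOnGr (sigmaC K) (fun n => ((W n).comap K.subtype).baseChange ℂ)
    (fun p => (F p).comap ι) n
  rw [isHodgeOnGr_iff sigmaC_involutive fun n => map_sigmaC_baseChange _]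
  refine IsOpposedOn.of_map hι ?_
  rw [hW_K, hG_K, funext hmapF]
  exact hK n

end IsMixedHodgeStructure

theorem mhs_kernel_general (V V' : Type*)
    [AddCommGroup V] [Module ℝ V]
    [AddCommGroup V'] [Module ℝ V']
    (W : ℤ → Submodule ℝ V) (F : ℤ → Submodule ℂ (ℂ ⊗[ℝ] V))
    (W' : ℤ → Submodule ℝ V') (F' : ℤ → Submodule ℂ (ℂ ⊗[ℝ] V'))
    (hWF : IsMixedHodgeStructure V W F) (hWF' : IsMixedHodgeStructure V' W' F')
    (f : V →ₗ[ℝ] V')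
    (hfW : ∀ n : ℤ, (W n).map f ≤ W' n)
    (hfF : ∀ p : ℤ, (F p).map (f.baseChange ℂ) ≤ F' p) :
    IsMixedHodgeStructure ↥(LinearMap.ker f)
      (fun n => (W n).comap (LinearMap.ker f).subtype)
      (fun p => (F p).comap ((LinearMap.ker f).subtype.baseChange ℂ)) := by
  refine hWF.restrict (LinearMap.ker f) fun n => ?_
  rw [← LinearMap.ker_baseChange_eq]
  refine hWF.isMixedOpposed.isOpposedOn_inf_ker hWF'.isMixedOpposed
    (fun n => Submodule.map_baseChange_le (hfW n)) hfF (fun p => ?_) n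
  rw [map_sigmaC_map_baseChange]
  exact Submodule.map_mono (hfF p)

/-- kernels. Let `f` be a morphism of mixed Hodge structures
`(V, W, F) → (V', W', F')` and `K := ker f`. Identifying `K_ℂ` with `ker f_ℂ ⊆ V_ℂ` via
the (injective) base change of the inclusion `K ↪ V`, the induced filtrations
`W^K_n := W_n ∩ K` and `F^p_K := F^p ∩ K_ℂ` (expressed as pullbacks along the inclusion and
its base change) define a mixed Hodge structure on `K`. -/
theorem mhs_kernel (V V' : Type*)
    [AddCommGroup V] [Module ℝ V] [FiniteDimensional ℝ V]
    [AddCommGroup V'] [Module ℝ V'] [FiniteDimensional ℝ V']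
    (W : ℤ → Submodule ℝ V) (F : ℤ → Submodule ℂ (ℂ ⊗[ℝ] V))
    (W' : ℤ → Submodule ℝ V') (F' : ℤ → Submodule ℂ (ℂ ⊗[ℝ] V'))
    (hWF : IsMixedHodgeStructure V W F) (hWF' : IsMixedHodgeStructure V' W' F')
    (f : V →ₗ[ℝ] V')
    (hfW : ∀ n : ℤ, (W n).map f ≤ W' n)
    (hfF : ∀ p : ℤ, (F p).map (f.baseChange ℂ) ≤ F' p) :
    IsMixedHodgeStructure ↥(LinearMap.ker f)
      (fun n => (W n).comap (LinearMap.ker f).subtype)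
      (fun p => (F p).comap ((LinearMap.ker f).subtype.baseChange ℂ)) :=
  mhs_kernel_general V V' W F W' F' hWF hWF' f hfW hfF
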